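/- arXiv:1709.09410 — 7 statements merged into one kernel-verified Lean document; each statement's English description precedes it below -/
import Mathlib

section
/- For all smooth f : ℝ → ℝ (with suitable integrability), ∫ f H_n dμ = ∫ D^n f dμ, where H_n is the n-th (probabilist's) Hermite polynomial and μ the standard Gaussian measure. -/
open MeasureTheory ProbabilityTheory Polynomial Real
open scoped NNReal ENNReal

lemma growth_aeval (p : Polynomial ℤ) :
    ∃ C : ℝ, ∃ k : ℕ, ∀ x : ℝ, |(aeval x p : ℝ)| ≤ C * (1 + |x|) ^ k := by
  set q : Polynomial ℝ := p.map (algebraMap ℤ ℝ) with hq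
  refine ⟨∑ i ∈ Finset.range (q.natDegree + 1), |q.coeff i|, q.natDegree, fun x => ?_⟩
  have hx1 : (1:ℝ) ≤ 1 + |x| := le_add_of_nonneg_right (abs_nonneg x)
  have he : (aeval x p : ℝ) = q.eval x := by rw [aeval_def, eval₂_eq_eval_map]
  rw [he, Polynomial.eval_eq_sum_range, Finset.sum_mul]
  refine (Finset.abs_sum_le_sum_abs _ _).trans (Finset.sum_le_sum fun i hi => ?_)
  rw [abs_mul, abs_pow]
  refine mul_le_mul_of_nonneg_left ?_ (abs_nonneg _)
  exact (pow_le_pow_left₀ (abs_nonneg x) (by linarith) i).trans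
    (pow_le_pow_right₀ hx1 (Finset.mem_range_succ_iff.mp hi))

lemma growth_mul {f g : ℝ → ℝ}
    (hf : ∃ C : ℝ, ∃ k : ℕ, ∀ x : ℝ, |f x| ≤ C * (1 + |x|) ^ k)
    (hg : ∃ C : ℝ, ∃ k : ℕ, ∀ x : ℝ, |g x| ≤ C * (1 + |x|) ^ k) :
    ∃ C : ℝ, ∃ k : ℕ, ∀ x : ℝ, |f x * g x| ≤ C * (1 + |x|) ^ k := by
  obtain ⟨C, k, hC⟩ := hf
  obtain ⟨D, l, hD⟩ := hg
  have hC0 : 0 ≤ C := by have := (abs_nonneg (f 0)).trans (hC 0); simpa using this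
  have hD0 : 0 ≤ D := by have := (abs_nonneg (g 0)).trans (hD 0); simpa using this
  refine ⟨C * D, k + l, fun x => ?_⟩
  rw [abs_mul, pow_add,
    show C * D * ((1 + |x|) ^ k * (1 + |x|) ^ l) = C * (1 + |x|) ^ k * (D * (1 + |x|) ^ l) by ring]
  exact mul_le_mul (hC x) (hD x) (abs_nonneg _) (mul_nonneg hC0 (by positivity))

lemma integrable_of_growth {h : ℝ → ℝ} (hc : Continuous h)
    (hb : ∃ C : ℝ, ∃ k : ℕ, ∀ x : ℝ, |h x| ≤ C * (1 + |x|) ^ k) :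
    Integrable (fun x => h x * Real.exp (-(x ^ 2 / 2))) := by
  obtain ⟨C, k, hCk⟩ := hb
  have hC0 : 0 ≤ C := by have := (abs_nonneg (h 0)).trans (hCk 0); simpa using this
  have hint : Integrable fun x : ℝ =>
      C * (k.factorial * Real.exp 2) * Real.exp (-(1/4 : ℝ) * x ^ 2) :=
    (integrable_exp_neg_mul_sq (by norm_num)).const_mul _
  refine hint.mono' ((hc.mul (by continuity)).aestronglyMeasurable) ?_
  filter_upwards with x
  have h1 : (0:ℝ) ≤ 1 + |x| := by positivity
  calc ‖h x * Real.exp (-(x ^ 2 / 2))‖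
      = |h x| * Real.exp (-(x ^ 2 / 2)) := by
        rw [norm_mul, Real.norm_eq_abs, Real.norm_eq_abs, abs_of_pos (Real.exp_pos _)]
    _ ≤ C * (1 + |x|) ^ k * Real.exp (-(x ^ 2 / 2)) :=
        mul_le_mul_of_nonneg_right (hCk x) (Real.exp_pos _).le
    _ ≤ C * (k.factorial * Real.exp (1 + |x|)) * Real.exp (-(x ^ 2 / 2)) := by
        refine mul_le_mul_of_nonneg_right (mul_le_mul_of_nonneg_left ?_ hC0) (Real.exp_pos _).le
        have h2 := Real.pow_div_factorial_le_exp _ h1 k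
        rw [div_le_iff₀ (by positivity)] at h2
        linarith [h2]
    _ = C * k.factorial * (Real.exp (1 + |x|) * Real.exp (-(x ^ 2 / 2))) := by ring
    _ ≤ C * k.factorial * (Real.exp 2 * Real.exp (-(1/4 : ℝ) * x ^ 2)) := by
        refine mul_le_mul_of_nonneg_left ?_ (mul_nonneg hC0 (Nat.cast_nonneg _))
        rw [← Real.exp_add, ← Real.exp_add]
        exact Real.exp_le_exp.2 (by nlinarith [sq_nonneg (|x| - 2), sq_abs x])
    _ = C * (k.factorial * Real.exp 2) * Real.exp (-(1/4 : ℝ) * x ^ 2) := by ring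

lemma hasDerivAt_hermite_gauss (n : ℕ) (x : ℝ) :
    HasDerivAt (fun y : ℝ => (aeval y (hermite n) : ℝ) * Real.exp (-(y ^ 2 / 2)))
      (-((aeval x (hermite (n + 1)) : ℝ) * Real.exp (-(x ^ 2 / 2)))) x := by
  have hH : HasDerivAt (fun y : ℝ => (aeval y (hermite n) : ℝ))
      (aeval x (derivative (hermite n))) x := (hermite n).hasDerivAt_aeval x
  have hinner : HasDerivAt (fun y : ℝ => -(y ^ 2 / 2)) (-x) x := by
    have := ((hasDerivAt_pow 2 x).div_const 2).neg
    exact this.congr_deriv (by norm_num)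
  have hexp : HasDerivAt (fun y : ℝ => Real.exp (-(y ^ 2 / 2)))
      (-x * Real.exp (-(x ^ 2 / 2))) x := by
    simpa [mul_comm] using hinner.exp
  have := hH.mul hexp
  refine this.congr_deriv ?_
  rw [hermite_succ]
  simp only [map_sub, map_mul, aeval_X]
  ring

lemma step_lemma (n : ℕ) (g : ℝ → ℝ) (hg : ContDiff ℝ (⊤ : ℕ∞) g)
    (hg0 : ∃ C : ℝ, ∃ k : ℕ, ∀ x : ℝ, |g x| ≤ C * (1 + |x|) ^ k)
    (hg1 : ∃ C : ℝ, ∃ k : ℕ, ∀ x : ℝ, |deriv g x| ≤ C * (1 + |x|) ^ k) :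
    ∫ x : ℝ, g x * (aeval x (hermite (n + 1)) : ℝ) * Real.exp (-(x ^ 2 / 2))
      = ∫ x : ℝ, deriv g x * (aeval x (hermite n) : ℝ) * Real.exp (-(x ^ 2 / 2)) := by
  have cg : Continuous g := hg.continuous
  have cg' : Continuous (deriv g) := hg.continuous_deriv (by exact_mod_cast le_top)
  have cH : ∀ m : ℕ, Continuous fun x : ℝ => (aeval x (hermite m) : ℝ) := fun m =>
    (hermite m).continuous_aeval
  have hu : ∀ x : ℝ, HasDerivAt g (deriv g x) x := fun x =>
    (hg.differentiable (by simp) x).hasDerivAt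
  have hv : ∀ x : ℝ, HasDerivAt (fun y : ℝ => (aeval y (hermite n) : ℝ) * Real.exp (-(y ^ 2 / 2)))
      (-((aeval x (hermite (n + 1)) : ℝ) * Real.exp (-(x ^ 2 / 2)))) x :=
    hasDerivAt_hermite_gauss n
  have huv' : Integrable ((fun x : ℝ => g x) *
      fun x : ℝ => -((aeval x (hermite (n + 1)) : ℝ) * Real.exp (-(x ^ 2 / 2)))) := by
    have h1 : Integrable fun x : ℝ =>
        (g x * (aeval x (hermite (n + 1)) : ℝ)) * Real.exp (-(x ^ 2 / 2)) :=
      integrable_of_growth (cg.mul (cH _)) (growth_mul hg0 (growth_aeval _))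
    have : ((fun x : ℝ => g x) *
        fun x : ℝ => -((aeval x (hermite (n + 1)) : ℝ) * Real.exp (-(x ^ 2 / 2))))
        = fun x : ℝ => -((g x * (aeval x (hermite (n + 1)) : ℝ)) * Real.exp (-(x ^ 2 / 2))) := by
      funext x; simp [Pi.mul_apply]; ring
    rw [this]
    exact h1.neg
  have hu'v : Integrable ((fun x : ℝ => deriv g x) *
      fun x : ℝ => (aeval x (hermite n) : ℝ) * Real.exp (-(x ^ 2 / 2))) := by
    have h1 : Integrable fun x : ℝ =>
        (deriv g x * (aeval x (hermite n) : ℝ)) * Real.exp (-(x ^ 2 / 2)) :=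
      integrable_of_growth (cg'.mul (cH _)) (growth_mul hg1 (growth_aeval _))
    have : ((fun x : ℝ => deriv g x) *
        fun x : ℝ => (aeval x (hermite n) : ℝ) * Real.exp (-(x ^ 2 / 2)))
        = fun x : ℝ => (deriv g x * (aeval x (hermite n) : ℝ)) * Real.exp (-(x ^ 2 / 2)) := by
      funext x; simp [Pi.mul_apply]; ring
    rw [this]
    exact h1
  have huv : Integrable ((fun x : ℝ => g x) *
      fun x : ℝ => (aeval x (hermite n) : ℝ) * Real.exp (-(x ^ 2 / 2))) := by
    have h1 : Integrable fun x : ℝ =>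
        (g x * (aeval x (hermite n) : ℝ)) * Real.exp (-(x ^ 2 / 2)) :=
      integrable_of_growth (cg.mul (cH _)) (growth_mul hg0 (growth_aeval _))
    have : ((fun x : ℝ => g x) *
        fun x : ℝ => (aeval x (hermite n) : ℝ) * Real.exp (-(x ^ 2 / 2)))
        = fun x : ℝ => (g x * (aeval x (hermite n) : ℝ)) * Real.exp (-(x ^ 2 / 2)) := by
      funext x; simp [Pi.mul_apply]; ring
    rw [this]
    exact h1
  have IBP := integral_mul_deriv_eq_deriv_mul_of_integrable (fun x _ => hu x) (fun x _ => hv x) huv' hu'v huv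
  simp only [mul_neg, integral_neg, neg_inj] at IBP
  simpa [mul_assoc] using IBP

lemma key_lemma (n : ℕ) : ∀ f : ℝ → ℝ, ContDiff ℝ (⊤ : ℕ∞) f →
    (∀ j ≤ n, ∃ C : ℝ, ∃ k : ℕ, ∀ x : ℝ, |iteratedDeriv j f x| ≤ C * (1 + |x|) ^ k) →
    ∫ x : ℝ, f x * (aeval x (hermite n) : ℝ) * Real.exp (-(x ^ 2 / 2))
      = ∫ x : ℝ, iteratedDeriv n f x * Real.exp (-(x ^ 2 / 2)) := by
  induction n with
  | zero => intro f hf hgr; simp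
  | succ n ih =>
    intro f hf hgr
    have hd : ContDiff ℝ (⊤ : ℕ∞) (deriv f) := (contDiff_infty_iff_deriv.mp hf).2
    rw [step_lemma n f hf (by simpa using hgr 0 (by omega))
      (by simpa [iteratedDeriv_one] using hgr 1 (by omega))]
    have := ih (deriv f) hd (fun j hj => by
      simpa [iteratedDeriv_succ'] using hgr (j + 1) (by omega))
    rw [this]
    simp_rw [← iteratedDeriv_succ']

lemma integral_gaussian_eq (g : ℝ → ℝ) :
    ∫ x, g x ∂(gaussianReal 0 1)
      = (Real.sqrt (2 * π))⁻¹ * ∫ x : ℝ, g x * Real.exp (-(x ^ 2 / 2)) := by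
  rw [gaussianReal_of_var_ne_zero 0 one_ne_zero]
  rw [show (gaussianPDF 0 1)
      = (fun x => (((fun y : ℝ => (gaussianPDFReal 0 1 y).toNNReal) x : ℝ≥0) : ℝ≥0∞)) from rfl]
  rw [integral_withDensity_eq_integral_smul
    ((measurable_gaussianPDFReal 0 1).real_toNNReal) g]
  have hpt : ∀ x : ℝ, (gaussianPDFReal 0 1 x).toNNReal • g x
      = (Real.sqrt (2 * π))⁻¹ * (g x * Real.exp (-(x ^ 2 / 2))) := by
    intro x
    rw [NNReal.smul_def, Real.coe_toNNReal _ (gaussianPDFReal_nonneg 0 1 x)]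
    rw [gaussianPDFReal]
    have : (-(x - 0) ^ 2 / (2 * ((1 : ℝ≥0) : ℝ))) = -(x ^ 2 / 2) := by
      push_cast; ring
    rw [this, smul_eq_mul]
    push_cast
    ring
  simp_rw [hpt]
  rw [integral_const_mul]


/-- For smooth `f` whose derivatives up to order `n` have at most polynomial growth,
`∫ f Hₙ dμ = ∫ Dⁿ f dμ` where `Hₙ` is the `n`-th probabilist's Hermite polynomial and
`μ` the standard Gaussian measure. -/
theorem integral_mul_hermite_eq_integral_iteratedDeriv (n : ℕ) (f : ℝ → ℝ)
    (hf : ContDiff ℝ (⊤ : ℕ∞) f)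
    (hgrowth : ∀ j ≤ n, ∃ C : ℝ, ∃ k : ℕ, ∀ x : ℝ,
      |iteratedDeriv j f x| ≤ C * (1 + |x|) ^ k) :
    ∫ x, f x * (Polynomial.aeval x (Polynomial.hermite n)) ∂(gaussianReal 0 1)
      = ∫ x, iteratedDeriv n f x ∂(gaussianReal 0 1) := by
  rw [integral_gaussian_eq (fun x => f x * (Polynomial.aeval x (Polynomial.hermite n))),
    integral_gaussian_eq (fun x => iteratedDeriv n f x)]
  congr 1
  exact key_lemma n f (hf.of_le (by simp)) hgrowth
end

section
/- For a ∈ [0,1] and φ, f, g ∈ L²(μ), the operator Q_{a,φ}[f](x) = ∫ f(ax + √(1-a²) y) φ(y) dμ(y) has L²(μ)-adjoint given by Q*_{a,φ}[f](x) = ∫ f(ax - √(1-a²) y) φ(√(1-a²) x + a y) dμ(y); that is, ∫ f · Q_{a,φ}[g] dμ = ∫ g · Q*_{a,φ}[f] dμ. -/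
open MeasureTheory ProbabilityTheory

noncomputable section

lemma gauss_prod_eq :
    (gaussianReal 0 1).prod (gaussianReal 0 1)
      = (volume.prod volume).withDensity
          (fun p : ℝ × ℝ => gaussianPDF 0 1 p.1 * gaussianPDF 0 1 p.2) := by
  refine Measure.prod_eq fun s t hs ht => ?_
  rw [withDensity_apply _ (hs.prod ht), ← Measure.prod_restrict,
    lintegral_prod_mul (measurable_gaussianPDF 0 1).aemeasurable
      (measurable_gaussianPDF 0 1).aemeasurable,
    gaussianReal_of_var_ne_zero 0 one_ne_zero, withDensity_apply _ hs, withDensity_apply _ ht]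

lemma rot_map_volume (c d : ℝ) (h : c ^ 2 + d ^ 2 = 1) :
    Measure.map (fun p : ℝ × ℝ => (c * p.1 - d * p.2, d * p.1 + c * p.2))
      (volume.prod volume) = volume.prod volume := by
  have hdet : LinearMap.det
      (Matrix.toLin (Module.Basis.finTwoProd ℝ) (Module.Basis.finTwoProd ℝ) !![c, -d; d, c]) = 1 := by
    rw [LinearMap.det_toLin, Matrix.det_fin_two_of]
    linear_combination h
  have hfun : (fun p : ℝ × ℝ => (c * p.1 - d * p.2, d * p.1 + c * p.2))
      = ⇑(Matrix.toLin (Module.Basis.finTwoProd ℝ) (Module.Basis.finTwoProd ℝ) !![c, -d; d, c]) := by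
    funext p
    simp [Matrix.toLin_finTwoProd_apply]
    ring
  rw [hfun]
  have : (volume.prod volume : Measure (ℝ × ℝ)) = (volume : Measure (ℝ × ℝ)) := rfl
  rw [this, Measure.map_linearMap_addHaar_eq_smul_addHaar _ (by rw [hdet]; exact one_ne_zero),
    hdet]
  simp

lemma pdf_rot (c d : ℝ) (h : c ^ 2 + d ^ 2 = 1) (x y : ℝ) :
    gaussianPDFReal 0 1 (c * x - d * y) * gaussianPDFReal 0 1 (d * x + c * y)
      = gaussianPDFReal 0 1 x * gaussianPDFReal 0 1 y := by
  simp only [gaussianPDFReal, sub_zero, NNReal.coe_one, mul_one, one_mul]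
  rw [mul_mul_mul_comm, ← Real.exp_add, mul_mul_mul_comm, ← Real.exp_add]
  congr 2
  linear_combination (-(x ^ 2 + y ^ 2) / 2) * h

lemma rot_measurePreserving (c d : ℝ) (h : c ^ 2 + d ^ 2 = 1) :
    MeasurePreserving (fun p : ℝ × ℝ => (c * p.1 - d * p.2, d * p.1 + c * p.2))
      ((gaussianReal 0 1).prod (gaussianReal 0 1))
      ((gaussianReal 0 1).prod (gaussianReal 0 1)) := by
  have hm : Measurable (fun p : ℝ × ℝ => (c * p.1 - d * p.2, d * p.1 + c * p.2)) := by
    fun_prop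
  refine ⟨hm, ?_⟩
  rw [gauss_prod_eq]
  have hρ : Measurable (fun p : ℝ × ℝ => gaussianPDF 0 1 p.1 * gaussianPDF 0 1 p.2) := by
    exact ((measurable_gaussianPDF 0 1).comp measurable_fst).mul
      ((measurable_gaussianPDF 0 1).comp measurable_snd)
  ext s hs
  rw [Measure.map_apply hm hs, withDensity_apply _ (hm hs), withDensity_apply _ hs]
  conv_rhs => rw [← rot_map_volume c d h]
  rw [setLIntegral_map hs hρ hm]
  refine lintegral_congr fun p => ?_
  show gaussianPDF 0 1 p.1 * gaussianPDF 0 1 p.2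
      = gaussianPDF 0 1 (c * p.1 - d * p.2) * gaussianPDF 0 1 (d * p.1 + c * p.2)
  simp only [gaussianPDF]
  rw [← ENNReal.ofReal_mul (gaussianPDFReal_nonneg _ _ _),
    ← ENNReal.ofReal_mul (gaussianPDFReal_nonneg _ _ _), pdf_rot c d h]


/-- The operator `Q_{a,φ}[f](x) = ∫ f(ax + √(1-a²) y) φ(y) dμ(y)` has `L²(μ)`-adjoint
`Q*_{a,φ}[f](x) = ∫ f(ax - √(1-a²) y) φ(√(1-a²) x + a y) dμ(y)`:
`∫ f · Q_{a,φ}[g] dμ = ∫ g · Q*_{a,φ}[f] dμ`. -/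
theorem convolution_operator_adjoint (a : ℝ) (ha : a ∈ Set.Icc (0 : ℝ) 1)
    (φ f g : ℝ → ℝ)
    (hφ : MemLp φ 2 (gaussianReal 0 1))
    (hf : MemLp f 2 (gaussianReal 0 1))
    (hg : MemLp g 2 (gaussianReal 0 1)) :
    ∫ x, f x * (∫ y, g (a * x + Real.sqrt (1 - a ^ 2) * y) * φ y ∂(gaussianReal 0 1))
        ∂(gaussianReal 0 1)
      = ∫ x, g x * (∫ y, f (a * x - Real.sqrt (1 - a ^ 2) * y) *
          φ (Real.sqrt (1 - a ^ 2) * x + a * y) ∂(gaussianReal 0 1)) ∂(gaussianReal 0 1) := by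
  set μ := gaussianReal 0 1 with hμ
  set b := Real.sqrt (1 - a ^ 2) with hbdef
  obtain ⟨ha0, ha1⟩ := ha
  have hb2 : b ^ 2 = 1 - a ^ 2 := Real.sq_sqrt (by nlinarith)
  have hab : a ^ 2 + b ^ 2 = 1 := by rw [hb2]; ring
  set π := μ.prod μ with hπ
  have hR : MeasurePreserving (fun p : ℝ × ℝ => (a * p.1 - b * p.2, b * p.1 + a * p.2)) π π :=
    rot_measurePreserving a b hab
  have hT : MeasurePreserving
      (fun p : ℝ × ℝ => (a * p.1 - -b * p.2, -b * p.1 + a * p.2)) π π :=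
    rot_measurePreserving a (-b) (by ring_nf; linarith [hab])
  have hfst : MeasurePreserving (Prod.fst : ℝ × ℝ → ℝ) π μ :=
    ⟨measurable_fst, by simp [hπ]⟩
  have hsnd : MeasurePreserving (Prod.snd : ℝ × ℝ → ℝ) π μ :=
    ⟨measurable_snd, by simp [hπ]⟩
  have hL : MeasurePreserving (fun p : ℝ × ℝ => a * p.1 + b * p.2) π μ := by
    have h2 : (Prod.fst ∘ fun p : ℝ × ℝ => (a * p.1 - -b * p.2, -b * p.1 + a * p.2))
        = fun p : ℝ × ℝ => a * p.1 + b * p.2 := by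
      funext p; simp only [Function.comp_apply]; ring
    exact h2 ▸ hfst.comp hT
  -- Memℒp / integrability facts
  have hf1 : MemLp (fun p : ℝ × ℝ => f p.1) 2 π := hf.comp_measurePreserving hfst
  have hφ2 : MemLp (fun p : ℝ × ℝ => φ p.2) 2 π := hφ.comp_measurePreserving hsnd
  have hu : MemLp (fun p : ℝ × ℝ => f p.1 * φ p.2) 2 π := by
    have haesm : AEStronglyMeasurable (fun p : ℝ × ℝ => f p.1 * φ p.2) π :=
      hf1.aestronglyMeasurable.mul hφ2.aestronglyMeasurable
    rw [memLp_two_iff_integrable_sq haesm]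
    have h1 : Integrable (fun p : ℝ × ℝ => (f p.1) ^ 2 * (φ p.2) ^ 2) π :=
      Integrable.mul_prod hf.integrable_sq hφ.integrable_sq
    exact h1.congr (Filter.Eventually.of_forall fun p => by ring)
  have hv : MemLp (fun p : ℝ × ℝ => g (a * p.1 + b * p.2)) 2 π :=
    hg.comp_measurePreserving hL
  have hF : Integrable (fun p : ℝ × ℝ => f p.1 * (g (a * p.1 + b * p.2) * φ p.2)) π := by
    have h1 : MemLp ((fun p : ℝ × ℝ => g (a * p.1 + b * p.2)) •
        (fun p : ℝ × ℝ => f p.1 * φ p.2)) 1 π :=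
      MemLp.smul hu hv (hpqr := ⟨by simp [ENNReal.inv_two_add_inv_two]⟩)
    have h2 := memLp_one_iff_integrable.mp h1
    exact h2.congr (Filter.Eventually.of_forall fun p => by
      simp [Pi.smul_apply, smul_eq_mul]; ring)
  have hG : Integrable
      (fun p : ℝ × ℝ => g p.1 * (f (a * p.1 - b * p.2) * φ (b * p.1 + a * p.2))) π := by
    have h1 := (memLp_one_iff_integrable.mpr hF).comp_measurePreserving hR
    have h2 := memLp_one_iff_integrable.mp h1
    refine h2.congr (Filter.Eventually.of_forall fun p => ?_)
    have h3 : a * (a * p.1 - b * p.2) + b * (b * p.1 + a * p.2) = p.1 := by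
      linear_combination p.1 * hab
    simp only [Function.comp_apply, h3]
    ring
  have key : ∀ p : ℝ × ℝ,
      f (a * p.1 - b * p.2) * (g (a * (a * p.1 - b * p.2) + b * (b * p.1 + a * p.2))
        * φ (b * p.1 + a * p.2))
      = g p.1 * (f (a * p.1 - b * p.2) * φ (b * p.1 + a * p.2)) := by
    intro p
    have h3 : a * (a * p.1 - b * p.2) + b * (b * p.1 + a * p.2) = p.1 := by
      linear_combination p.1 * hab
    rw [h3]; ring
  calc
    ∫ x, f x * (∫ y, g (a * x + b * y) * φ y ∂μ) ∂μ
        = ∫ x, ∫ y, f x * (g (a * x + b * y) * φ y) ∂μ ∂μ := by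
          simp_rw [integral_const_mul]
    _ = ∫ p : ℝ × ℝ, f p.1 * (g (a * p.1 + b * p.2) * φ p.2) ∂π :=
          (integral_prod _ hF).symm
    _ = ∫ p : ℝ × ℝ, g p.1 * (f (a * p.1 - b * p.2) * φ (b * p.1 + a * p.2)) ∂π := by
          conv_lhs => rw [← hR.map_eq]
          rw [integral_map hR.aemeasurable
            (hR.map_eq.symm ▸ hF.aestronglyMeasurable)]
          exact integral_congr_ae (Filter.Eventually.of_forall fun p => key p)
    _ = ∫ x, g x * (∫ y, f (a * x - b * y) * φ (b * x + a * y) ∂μ) ∂μ := by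
          rw [integral_prod _ hG]
          simp_rw [integral_const_mul]
end
end

section
/- For a ∈ [0,1] and n ≥ m natural numbers, Q_{a,𝓗_m}[𝓗_n] = a^{n-m} (1-a²)^{m/2} · C(n,m)^{1/2} · 𝓗_{n-m}, and Q_{a,𝓗_m}[𝓗_n] = 0 when n < m. -/
open MeasureTheory ProbabilityTheory Polynomial
open scoped ENNReal NNReal

namespace HermiteConvAux

lemma derivative_hermite (n : ℕ) :
    derivative (hermite n) = (n : ℤ[X]) * hermite (n - 1) := by
  cases n with
  | zero => simp [hermite_zero]
  | succ n =>
    simp only [Nat.add_sub_cancel]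
    induction n using Nat.twoStepInduction with
    | zero => simp [hermite_one, hermite_zero]
    | one =>
      have h2 : hermite 2 = X * hermite 1 - derivative (hermite 1) := hermite_succ 1
      rw [h2, hermite_one]
      push_cast
      simp
      ring
    | more k ih1 ih2 =>
      rw [hermite_succ (k+2), derivative_sub, derivative_mul, derivative_X, ih2, derivative_mul,
        ih1, hermite_succ (k+1), ih1]
      push_cast
      simp only [derivative_add, derivative_ofNat, derivative_natCast, derivative_one, add_zero, mul_zero,
        zero_add]
      ring

lemma aeval_derivative_hermite (n : ℕ) (t : ℝ) :
    aeval t (derivative (hermite n)) = (n : ℝ) * aeval t (hermite (n - 1)) := by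
  rw [derivative_hermite, map_mul, map_natCast]

lemma aeval_hermite_succ (n : ℕ) (t : ℝ) :
    aeval t (hermite (n + 1)) = t * aeval t (hermite n) - (n : ℝ) * aeval t (hermite (n - 1)) := by
  rw [hermite_succ, map_sub, map_mul, aeval_X, aeval_derivative_hermite]


lemma integrable_eval_mul_gauss (q : ℝ[X]) :
    Integrable (fun y : ℝ => eval y q * Real.exp (-(y ^ 2 / 2))) := by
  induction q using Polynomial.induction_on' with
  | add p r hp hr =>
    have := hp.add hr
    refine this.congr (Filter.Eventually.of_forall fun y => ?_)
    simp [eval_add]; ring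
  | monomial k c =>
    have h : Integrable (fun y : ℝ => y ^ (k : ℝ) * Real.exp (-(2⁻¹ : ℝ) * y ^ 2)) :=
      integrable_rpow_mul_exp_neg_mul_sq (by norm_num)
        (lt_of_lt_of_le (by norm_num) (Nat.cast_nonneg k))
    refine (h.const_mul c).congr (Filter.Eventually.of_forall fun y => ?_)
    beta_reduce
    rw [Real.rpow_natCast]
    simp only [eval_monomial]
    rw [show -(2⁻¹ : ℝ) * y ^ 2 = -(y ^ 2 / 2) by ring]
    ring

lemma aeval_eq_eval_comp (p : ℤ[X]) (c d y : ℝ) :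
    aeval (c + d * y) p
      = eval y ((p.map (Int.castRingHom ℝ)).comp (C c + C d * X)) := by
  rw [eval_comp]
  simp [aeval_def, eval₂_eq_eval_map, algebraMap_int_eq]

lemma int_shape1 (c d : ℝ) (p q : ℤ[X]) :
    Integrable (fun y : ℝ =>
      y * (aeval (c + d * y) p * aeval y q) * Real.exp (-(y ^ 2 / 2))) := by
  have h := integrable_eval_mul_gauss
    (X * ((p.map (Int.castRingHom ℝ)).comp (C c + C d * X) * q.map (Int.castRingHom ℝ)))
  refine h.congr (Filter.Eventually.of_forall fun y => ?_)
  beta_reduce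
  rw [aeval_eq_eval_comp]
  simp only [eval_mul, eval_X, eval_map, aeval_def, algebraMap_int_eq]

lemma int_shape0 (c d : ℝ) (p q : ℤ[X]) :
    Integrable (fun y : ℝ =>
      aeval (c + d * y) p * aeval y q * Real.exp (-(y ^ 2 / 2))) := by
  have h := integrable_eval_mul_gauss
    ((p.map (Int.castRingHom ℝ)).comp (C c + C d * X) * q.map (Int.castRingHom ℝ))
  refine h.congr (Filter.Eventually.of_forall fun y => ?_)
  beta_reduce
  rw [aeval_eq_eval_comp]
  simp only [eval_mul, eval_X, eval_map, aeval_def, algebraMap_int_eq]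

lemma integrable_of_eq {f : ℝ → ℝ} (g : ℝ → ℝ) (h : Integrable f) (he : ∀ y, f y = g y) :
    Integrable g :=
  h.congr (Filter.Eventually.of_forall he)

lemma stein (u u' : ℝ → ℝ) (hu : ∀ y, HasDerivAt u (u' y) y)
    (h1 : Integrable (fun y => y * u y * Real.exp (-(y ^ 2 / 2))))
    (h2 : Integrable (fun y => u' y * Real.exp (-(y ^ 2 / 2))))
    (h3 : Integrable (fun y => u y * Real.exp (-(y ^ 2 / 2)))) :
    ∫ y, y * u y * Real.exp (-(y ^ 2 / 2)) = ∫ y, u' y * Real.exp (-(y ^ 2 / 2)) := by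
  have hg : ∀ y : ℝ,
      HasDerivAt (fun t : ℝ => Real.exp (-(t ^ 2 / 2))) (-y * Real.exp (-(y ^ 2 / 2))) y := by
    intro y
    have h : HasDerivAt (fun t : ℝ => -(t ^ 2 / 2)) (-y) y := by
      have := ((hasDerivAt_pow 2 y).div_const 2).neg
      simp at this
      exact this
    simpa [mul_comm] using h.exp
  have key := integral_mul_deriv_eq_deriv_mul_of_integrable (u := u) (u' := u')
    (v := fun t : ℝ => Real.exp (-(t ^ 2 / 2)))
    (v' := fun y : ℝ => -y * Real.exp (-(y ^ 2 / 2))) (fun x _ => hu x) (fun x _ => hg x) ?_ ?_ ?_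
  · have l1 : ∫ y, u y * (-y * Real.exp (-(y ^ 2 / 2)))
        = - ∫ y, y * u y * Real.exp (-(y ^ 2 / 2)) := by
      rw [← integral_neg]
      congr 1; funext y; ring
    have : (∫ y, u y * (-y * Real.exp (-(y ^ 2 / 2))))
        = - ∫ y, u' y * Real.exp (-(y ^ 2 / 2)) := key
    rw [l1] at this
    linarith
  · exact integrable_of_eq _ h1.neg fun y => by simp [Pi.mul_apply]; ring
  · exact integrable_of_eq _ h2 fun y => by simp [Pi.mul_apply]
  · exact integrable_of_eq _ h3 fun y => by simp [Pi.mul_apply]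

lemma hasDerivAt_comp_aeval (c d : ℝ) (p : ℤ[X]) (y : ℝ) :
    HasDerivAt (fun y : ℝ => aeval (c + d * y) p) (d * aeval (c + d * y) (derivative p)) y := by
  have hz : HasDerivAt (fun y : ℝ => c + d * y) d y := by
    simpa using ((hasDerivAt_id y).const_mul d).const_add c
  have h := (Polynomial.hasDerivAt_aeval p (c + d * y)).comp y hz
  simp [Function.comp, mul_comm] at h
  exact h

lemma hu_prod (c d : ℝ) (n m : ℕ) (y : ℝ) :
    HasDerivAt (fun y : ℝ => aeval (c + d * y) (hermite n) * aeval y (hermite m))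
      (d * ((n : ℝ) * aeval (c + d * y) (hermite (n - 1))) * aeval y (hermite m)
        + aeval (c + d * y) (hermite n) * ((m : ℝ) * aeval y (hermite (m - 1)))) y := by
  have h1 := hasDerivAt_comp_aeval c d (hermite n) y
  have h2 := Polynomial.hasDerivAt_aeval (hermite m) y
  have h := h1.mul h2
  simp [aeval_derivative_hermite] at h
  exact h

lemma stein_herm (c d : ℝ) (n m : ℕ) :
    ∫ y, y * (aeval (c + d * y) (hermite n) * aeval y (hermite m)) * Real.exp (-(y ^ 2 / 2))
      = d * n * (∫ y, aeval (c + d * y) (hermite (n - 1)) * aeval y (hermite m)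
            * Real.exp (-(y ^ 2 / 2)))
        + m * ∫ y, aeval (c + d * y) (hermite n) * aeval y (hermite (m - 1))
            * Real.exp (-(y ^ 2 / 2)) := by
  have hst := stein (fun y => aeval (c + d * y) (hermite n) * aeval y (hermite m))
    (fun y => d * ((n : ℝ) * aeval (c + d * y) (hermite (n - 1))) * aeval y (hermite m)
        + aeval (c + d * y) (hermite n) * ((m : ℝ) * aeval y (hermite (m - 1))))
    (fun y => hu_prod c d n m y)
    (int_shape1 c d _ _)
    (integrable_of_eq _
      (((int_shape0 c d (hermite (n - 1)) (hermite m)).const_mul (d * n)).add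
        ((int_shape0 c d (hermite n) (hermite (m - 1))).const_mul m))
      (fun y => by simp only [Pi.add_apply]; ring))
    (int_shape0 c d _ _)
  rw [hst]
  have hsplit : ∀ y : ℝ,
      (d * ((n : ℝ) * aeval (c + d * y) (hermite (n - 1))) * aeval y (hermite m)
        + aeval (c + d * y) (hermite n) * ((m : ℝ) * aeval y (hermite (m - 1))))
        * Real.exp (-(y ^ 2 / 2))
      = d * n * (aeval (c + d * y) (hermite (n - 1)) * aeval y (hermite m)
            * Real.exp (-(y ^ 2 / 2)))
        + m * (aeval (c + d * y) (hermite n) * aeval y (hermite (m - 1))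
            * Real.exp (-(y ^ 2 / 2))) := fun y => by ring
  simp only [hsplit]
  rw [integral_add ((int_shape0 c d _ _).const_mul _) ((int_shape0 c d _ _).const_mul _),
    integral_const_mul, integral_const_mul]

lemma recB (c d : ℝ) (n m : ℕ) :
    ∫ y, aeval (c + d * y) (hermite n) * aeval y (hermite (m + 1)) * Real.exp (-(y ^ 2 / 2))
      = d * n * ∫ y, aeval (c + d * y) (hermite (n - 1)) * aeval y (hermite m)
          * Real.exp (-(y ^ 2 / 2)) := by
  have hsplit : ∀ y : ℝ,
      aeval (c + d * y) (hermite n) * aeval y (hermite (m + 1)) * Real.exp (-(y ^ 2 / 2))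
        = y * (aeval (c + d * y) (hermite n) * aeval y (hermite m)) * Real.exp (-(y ^ 2 / 2))
          - (m : ℝ) * (aeval (c + d * y) (hermite n) * aeval y (hermite (m - 1))
              * Real.exp (-(y ^ 2 / 2))) := by
    intro y; rw [aeval_hermite_succ]; ring
  simp only [hsplit]
  rw [integral_sub (int_shape1 c d _ _) ((int_shape0 c d _ _).const_mul _),
    integral_const_mul, stein_herm]
  ring

lemma rec0 (c d : ℝ) (n : ℕ) :
    ∫ y, aeval (c + d * y) (hermite (n + 1)) * aeval y (hermite 0) * Real.exp (-(y ^ 2 / 2))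
      = c * (∫ y, aeval (c + d * y) (hermite n) * aeval y (hermite 0) * Real.exp (-(y ^ 2 / 2)))
        + (d ^ 2 - 1) * n * ∫ y, aeval (c + d * y) (hermite (n - 1)) * aeval y (hermite 0)
            * Real.exp (-(y ^ 2 / 2)) := by
  have hsplit : ∀ y : ℝ,
      aeval (c + d * y) (hermite (n + 1)) * aeval y (hermite 0) * Real.exp (-(y ^ 2 / 2))
        = c * (aeval (c + d * y) (hermite n) * aeval y (hermite 0) * Real.exp (-(y ^ 2 / 2)))
          + d * (y * (aeval (c + d * y) (hermite n) * aeval y (hermite 0))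
              * Real.exp (-(y ^ 2 / 2)))
          - (n : ℝ) * (aeval (c + d * y) (hermite (n - 1)) * aeval y (hermite 0)
              * Real.exp (-(y ^ 2 / 2))) := by
    intro y; rw [aeval_hermite_succ]; ring
  simp only [hsplit]
  have I1 : Integrable (fun y : ℝ =>
      c * (aeval (c + d * y) (hermite n) * aeval y (hermite 0) * Real.exp (-(y ^ 2 / 2)))
        + d * (y * (aeval (c + d * y) (hermite n) * aeval y (hermite 0))
            * Real.exp (-(y ^ 2 / 2)))) :=
    integrable_of_eq _ (((int_shape0 c d (hermite n) (hermite 0)).const_mul c).add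
      ((int_shape1 c d (hermite n) (hermite 0)).const_mul d))
      (fun y => by simp only [Pi.add_apply])
  rw [integral_sub I1 ((int_shape0 c d _ _).const_mul _),
    integral_add ((int_shape0 c d _ _).const_mul _) ((int_shape1 c d _ _).const_mul _),
    integral_const_mul, integral_const_mul, integral_const_mul, stein_herm]
  simp only [Nat.cast_zero, zero_mul, add_zero, mul_zero]
  ring


lemma baseA (a b x : ℝ) (hab : a ^ 2 + b ^ 2 = 1) (n : ℕ) :
    ∫ y, aeval (a * x + b * y) (hermite n) * aeval y (hermite 0) * Real.exp (-(y ^ 2 / 2))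
      = a ^ n * aeval x (hermite n) * ∫ y, Real.exp (-(y ^ 2 / 2)) := by
  induction n using Nat.twoStepInduction with
  | zero => simp [hermite_zero]
  | one =>
    have h := rec0 (a * x) b 0
    simp only [Nat.cast_zero, zero_mul, mul_zero, add_zero, hermite_zero] at h ⊢
    rw [h]
    simp [hermite_one, hermite_zero]
  | more k ih ih1 =>
    have h := rec0 (a * x) b (k + 1)
    simp only [Nat.add_sub_cancel] at h
    rw [h, ih1, ih, aeval_hermite_succ (k + 1) x]
    simp only [Nat.add_sub_cancel]
    have hb : b ^ 2 - 1 = -(a ^ 2) := by linarith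
    rw [hb]
    push_cast
    ring

lemma keyT (a b x : ℝ) (hab : a ^ 2 + b ^ 2 = 1) (m n : ℕ) :
    ∫ y, aeval (a * x + b * y) (hermite n) * aeval y (hermite m) * Real.exp (-(y ^ 2 / 2))
      = (if m ≤ n then
            (n.choose m : ℝ) * (m.factorial : ℝ) * a ^ (n - m) * b ^ m
              * aeval x (hermite (n - m))
          else 0) * ∫ y, Real.exp (-(y ^ 2 / 2)) := by
  induction m generalizing n with
  | zero =>
    simp only [Nat.zero_le, if_true, Nat.choose_zero_right, Nat.factorial_zero, pow_zero,
      Nat.sub_zero, Nat.cast_one, one_mul, mul_one]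
    simpa [hermite_zero] using baseA a b x hab n
  | succ m ih =>
    rw [recB (a * x) b n (m)]
    cases n with
    | zero =>
      simp
    | succ k =>
      simp only [Nat.add_sub_cancel]
      rw [ih k]
      by_cases hm : m ≤ k
      · have hm' : m + 1 ≤ k + 1 := by omega
        simp only [hm, hm', if_true, Nat.succ_sub_succ]
        have hnat : (k + 1) * Nat.choose k m * Nat.factorial m
            = Nat.choose (k + 1) (m + 1) * Nat.factorial (m + 1) := by
          have h := Nat.add_one_mul_choose_eq k m
          rw [Nat.factorial_succ, ← mul_assoc, ← h]
        have hcast : ((Nat.choose (k + 1) (m + 1) : ℝ)) * (Nat.factorial (m + 1) : ℝ)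
            = ((k : ℝ) + 1) * (Nat.choose k m : ℝ) * (Nat.factorial m : ℝ) := by
          exact_mod_cast hnat.symm
        rw [hcast]
        push_cast
        ring
      · have hm' : ¬ (m + 1 ≤ k + 1) := by omega
        simp only [hm, hm', if_false]
        ring

lemma intG : ∫ y : ℝ, Real.exp (-(y ^ 2 / 2)) = Real.sqrt (2 * Real.pi) := by
  have h2 : ∀ y : ℝ, -(y ^ 2 / 2) = -(1 / 2 : ℝ) * y ^ 2 := fun y => by ring
  simp_rw [h2]
  rw [integral_gaussian]
  congr 1
  ring

lemma gauss_meas (f : ℝ → ℝ) :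
    ∫ y, f y ∂(gaussianReal 0 1)
      = (Real.sqrt (2 * Real.pi))⁻¹ * ∫ y, f y * Real.exp (-(y ^ 2 / 2)) := by
  rw [gaussianReal_of_var_ne_zero 0 one_ne_zero]
  have hd : volume.withDensity (gaussianPDF 0 1)
      = volume.withDensity (fun y => ((gaussianPDFReal 0 1 y).toNNReal : ℝ≥0∞)) := rfl
  rw [hd, integral_withDensity_eq_integral_smul
    ((measurable_gaussianPDFReal 0 1).real_toNNReal) f]
  have hpt : ∀ y : ℝ, (gaussianPDFReal 0 1 y).toNNReal • f y
      = (Real.sqrt (2 * Real.pi))⁻¹ * (f y * Real.exp (-(y ^ 2 / 2))) := by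
    intro y
    rw [NNReal.smul_def, Real.coe_toNNReal _ (gaussianPDFReal_nonneg 0 1 y)]
    unfold gaussianPDFReal
    push_cast
    rw [mul_one, mul_one, sub_zero]
    rw [show -y ^ 2 / 2 = -(y ^ 2 / 2) by ring, smul_eq_mul]
    ring
  simp_rw [hpt]
  rw [integral_const_mul]

end HermiteConvAux

open HermiteConvAux in
/-- Action of the convolution operator on Hermite polynomials: for `a ∈ [0,1]`,
`Q_{a,𝓗_m}[𝓗_n] = a^{n-m} (1-a²)^{m/2} C(n,m)^{1/2} 𝓗_{n-m}` if `n ≥ m`, and `0` if `n < m`. -/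
theorem convolution_hermite_hermite (a : ℝ) (ha : a ∈ Set.Icc (0 : ℝ) 1) (n m : ℕ) (x : ℝ) :
    (∫ y, ((Real.sqrt (Nat.factorial n))⁻¹ *
          Polynomial.aeval (a * x + Real.sqrt (1 - a ^ 2) * y) (Polynomial.hermite n)) *
        ((Real.sqrt (Nat.factorial m))⁻¹ * Polynomial.aeval y (Polynomial.hermite m))
        ∂(gaussianReal 0 1))
      = if m ≤ n then
          a ^ (n - m) * (1 - a ^ 2) ^ ((m : ℝ) / 2) * Real.sqrt (Nat.choose n m) *
            ((Real.sqrt (Nat.factorial (n - m)))⁻¹ *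
              Polynomial.aeval x (Polynomial.hermite (n - m)))
        else 0 := by
  obtain ⟨ha0, ha1⟩ := ha
  set b := Real.sqrt (1 - a ^ 2) with hbdef
  have h1a : (0 : ℝ) ≤ 1 - a ^ 2 := by nlinarith
  have hb2 : b ^ 2 = 1 - a ^ 2 := Real.sq_sqrt h1a
  have hab : a ^ 2 + b ^ 2 = 1 := by rw [hb2]; ring
  have hsplit : ∀ y : ℝ,
      ((Real.sqrt (Nat.factorial n))⁻¹ * aeval (a * x + b * y) (hermite n))
        * ((Real.sqrt (Nat.factorial m))⁻¹ * aeval y (hermite m))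
      = ((Real.sqrt (Nat.factorial n))⁻¹ * (Real.sqrt (Nat.factorial m))⁻¹)
          * (aeval (a * x + b * y) (hermite n) * aeval y (hermite m)) := fun y => by ring
  simp only [hsplit]
  rw [integral_const_mul,
    gauss_meas (fun y => aeval (a * x + b * y) (hermite n) * aeval y (hermite m)),
    keyT a b x hab m n, intG]
  by_cases hm : m ≤ n
  · simp only [hm, if_true]
    have h2π : (0 : ℝ) < Real.sqrt (2 * Real.pi) := Real.sqrt_pos.2 (by positivity)
    have hbm : b ^ m = (1 - a ^ 2) ^ ((m : ℝ) / 2) := by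
      rw [hbdef, Real.sqrt_eq_rpow, ← Real.rpow_natCast ((1 - a ^ 2) ^ ((1 : ℝ) / 2)) m,
        ← Real.rpow_mul h1a]
      congr 1
      ring
    rw [← hbm]
    have hfac : (Nat.factorial n : ℝ)
        = (n.choose m : ℝ) * (m.factorial : ℝ) * ((n - m).factorial : ℝ) := by
      exact_mod_cast (Nat.choose_mul_factorial_mul_factorial hm).symm
    have hsn : Real.sqrt (Nat.factorial n)
        = Real.sqrt (n.choose m) * Real.sqrt (m.factorial) * Real.sqrt ((n - m).factorial) := by
      rw [hfac, Real.sqrt_mul (by positivity), Real.sqrt_mul (by positivity)]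
    have e1 : Real.sqrt (m.factorial) * Real.sqrt (m.factorial) = (m.factorial : ℝ) :=
      Real.mul_self_sqrt (by positivity)
    have hC : (0 : ℝ) < (n.choose m : ℝ) := by exact_mod_cast Nat.choose_pos hm
    have e2 : Real.sqrt (n.choose m) * Real.sqrt (n.choose m) = (n.choose m : ℝ) :=
      Real.mul_self_sqrt (by positivity)
    have h1 : Real.sqrt (n.choose m : ℝ) ≠ 0 := ne_of_gt (Real.sqrt_pos.2 hC)
    have h2 : Real.sqrt (m.factorial : ℝ) ≠ 0 :=
      ne_of_gt (Real.sqrt_pos.2 (by exact_mod_cast m.factorial_pos))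
    have h3 : Real.sqrt ((n - m).factorial : ℝ) ≠ 0 :=
      ne_of_gt (Real.sqrt_pos.2 (by exact_mod_cast (n - m).factorial_pos))
    rw [hsn]
    field_simp
    linear_combination
      (-(a ^ (n - m) * b ^ m * (aeval x) (hermite (n - m)))
          * (Real.sqrt ((n.choose m : ℝ)) * Real.sqrt ((n.choose m : ℝ)))) * e1
        + (-(a ^ (n - m) * b ^ m * (aeval x) (hermite (n - m)))
              * (m.factorial : ℝ)) * e2
  · simp only [hm, if_false]
    simp
end

section
/- First technical lemma: let N ≥ K be positive integers, a_φ = (1 + N/K)^{-1/4}, C_k = (1 + N/K)^{k/2}. Let i, k be natural numbers with 0 ≤ k ≤ N-1, K ≤ i+k ≤ N, 1 ≤ i ≤ N. Then for all a ∈ (a_φ, 1) and all l ≥ K: a^{-i} C(k+l,k)^{1/2} C(k+l,k+i)^{1/2} 𝟙_{l ≥ i+K} + a^{i} C(k+l+i,k)^{1/2} C(k+l+i,k+i)^{1/2} ≤ 2 C_k C_{k+i} C(k+l,k)^{1/2} C(k+l+i,k+i)^{1/2}. -/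
private lemma choose_step (K N k m : ℕ) (hK : 1 ≤ K) (hkN : k ≤ N) (hm : k + K ≤ m + 1) :
    (((m + 1).choose k : ℝ)) ≤ (1 + (N : ℝ) / K) * (m.choose k) := by
  have hkm : k ≤ m := by omega
  have hc : (0:ℝ) < (m.choose k : ℝ) := by exact_mod_cast Nat.choose_pos hkm
  have hKpos : (0:ℝ) < (K:ℝ) := by exact_mod_cast hK
  have hdK : (K : ℝ) ≤ ((m + 1 - k : ℕ) : ℝ) := by exact_mod_cast (by omega : K ≤ m + 1 - k)
  have hd0 : (0:ℝ) < ((m + 1 - k : ℕ) : ℝ) := lt_of_lt_of_le hKpos hdK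
  have hdeq : ((m + 1 - k : ℕ) : ℝ) = (m : ℝ) + 1 - k := by
    have : k ≤ m + 1 := by omega
    push_cast [Nat.cast_sub this]
    ring
  have hid : ((m.choose k : ℝ)) * ((m:ℝ) + 1) = (((m + 1).choose k : ℝ)) * ((m + 1 - k : ℕ) : ℝ) := by
    exact_mod_cast congrArg (Nat.cast : ℕ → ℝ) (Nat.choose_mul_succ_eq m k)
  have hNk : (k : ℝ) ≤ (N : ℝ) := by exact_mod_cast hkN
  have key : (m:ℝ) + 1 ≤ (1 + (N : ℝ) / K) * ((m + 1 - k : ℕ) : ℝ) := by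
    have h1 : (N : ℝ) ≤ (N : ℝ) / K * ((m + 1 - k : ℕ) : ℝ) := by
      have := mul_le_mul_of_nonneg_left hdK (by positivity : (0:ℝ) ≤ (N:ℝ)/K)
      calc (N:ℝ) = (N:ℝ)/K * K := by field_simp
        _ ≤ _ := this
    nlinarith [hdeq]
  nlinarith [mul_le_mul_of_nonneg_left key hc.le, hid, hd0]

private lemma choose_iter (K N k l : ℕ) (hK : 1 ≤ K) (hkN : k ≤ N) (hl : K ≤ l) :
    ∀ i : ℕ, (((k + l + i).choose k : ℝ)) ≤ (1 + (N : ℝ) / K) ^ i * ((k + l).choose k) := by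
  have hQ0 : (0:ℝ) ≤ 1 + (N : ℝ) / K := by positivity
  intro i
  induction i with
  | zero => simp
  | succ n ih =>
    have h1 : (((k + l + (n+1)).choose k : ℝ)) ≤ (1 + (N : ℝ) / K) * ((k + l + n).choose k) := by
      have := choose_step K N k (k + l + n) hK hkN (by omega)
      convert this using 3 <;> omega
    calc (((k + l + (n+1)).choose k : ℝ)) ≤ (1 + (N : ℝ) / K) * ((k + l + n).choose k) := h1
      _ ≤ (1 + (N : ℝ) / K) * ((1 + (N : ℝ) / K) ^ n * ((k + l).choose k)) :=
          mul_le_mul_of_nonneg_left ih hQ0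
      _ = (1 + (N : ℝ) / K) ^ (n+1) * ((k + l).choose k) := by ring


/-- First technical lemma: with `a_φ = (1+N/K)^{-1/4}` and `C_k = (1+N/K)^{k/2}`, for
`0 ≤ k ≤ N-1`, `K ≤ i+k ≤ N`, `1 ≤ i ≤ N`, all `a ∈ (a_φ, 1)` and all `l ≥ K`:
`a^{-i} √C(k+l,k) √C(k+l,k+i) 𝟙_{l ≥ i+K} + a^i √C(k+l+i,k) √C(k+l+i,k+i)
  ≤ 2 C_k C_{k+i} √C(k+l,k) √C(k+l+i,k+i)`. -/
theorem first_technical_lemma (K N i k l : ℕ)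
    (hK : 1 ≤ K) (hKN : K ≤ N)
    (hk : k ≤ N - 1) (hik₁ : K ≤ i + k) (hik₂ : i + k ≤ N)
    (hi₁ : 1 ≤ i) (hi₂ : i ≤ N)
    (hl : K ≤ l)
    (a : ℝ) (ha₁ : (1 + (N : ℝ) / K) ^ (-(1 / 4 : ℝ)) < a) (ha₂ : a < 1) :
    a ^ (-(i : ℤ)) * Real.sqrt ((k + l).choose k) * Real.sqrt ((k + l).choose (k + i)) *
        (if i + K ≤ l then (1 : ℝ) else 0)
      + a ^ i * Real.sqrt ((k + l + i).choose k) * Real.sqrt ((k + l + i).choose (k + i))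
    ≤ 2 * (1 + (N : ℝ) / K) ^ ((k : ℝ) / 2) * (1 + (N : ℝ) / K) ^ (((k : ℝ) + i) / 2) *
        Real.sqrt ((k + l).choose k) * Real.sqrt ((k + l + i).choose (k + i)) := by
  set Q : ℝ := 1 + (N : ℝ) / K with hQdef
  have hQ0 : (0:ℝ) < Q := by positivity
  have hQ1 : (1:ℝ) ≤ Q := by
    have h : (0:ℝ) ≤ (N:ℝ)/K := by positivity
    rw [hQdef]; linarith
  have ha0 : 0 < a := lt_trans (Real.rpow_pos_of_pos hQ0 _) ha₁
  set E : ℝ := (k : ℝ) / 2 + ((k : ℝ) + i) / 2 with hEdef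
  have hQE : Q ^ ((k:ℝ)/2) * Q ^ (((k:ℝ)+i)/2) = Q ^ E := (Real.rpow_add hQ0 _ _).symm
  set C1 := Real.sqrt ((k + l).choose k)
  set C2 := Real.sqrt ((k + l).choose (k + i))
  set C3 := Real.sqrt ((k + l + i).choose (k + i))
  set C4 := Real.sqrt ((k + l + i).choose k)
  have hC1 : 0 ≤ C1 := Real.sqrt_nonneg _
  have hC3 : 0 ≤ C3 := Real.sqrt_nonneg _
  -- term 1 bound
  have haiz : a ^ (-(i : ℤ)) ≤ Q ^ ((i:ℝ)/4) := by
    have hainv : a⁻¹ ≤ Q ^ (1/4:ℝ) := by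
      have h1 : Q ^ (-(1/4:ℝ)) = (Q ^ (1/4:ℝ))⁻¹ := Real.rpow_neg hQ0.le _
      have h2 : a⁻¹ ≤ (Q ^ (-(1/4:ℝ)))⁻¹ := inv_anti₀ (Real.rpow_pos_of_pos hQ0 _) ha₁.le
      rwa [h1, inv_inv] at h2
    have : a ^ (-(i : ℤ)) = (a⁻¹) ^ i := by
      rw [zpow_neg, zpow_natCast, inv_pow]
    rw [this]
    calc (a⁻¹) ^ i ≤ (Q ^ (1/4:ℝ)) ^ i :=
          pow_le_pow_left₀ (by positivity) hainv i
      _ = Q ^ ((i:ℝ)/4) := by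
          rw [← Real.rpow_natCast (Q ^ (1/4:ℝ)) i, ← Real.rpow_mul hQ0.le]
          congr 1
          ring
  have hE4 : Q ^ ((i:ℝ)/4) ≤ Q ^ E := by
    apply Real.rpow_le_rpow_of_exponent_le hQ1
    have : (0:ℝ) ≤ (k:ℝ) := by positivity
    have : (0:ℝ) ≤ (i:ℝ) := by positivity
    rw [hEdef]; linarith
  have hC23 : C2 ≤ C3 := by
    apply Real.sqrt_le_sqrt
    exact_mod_cast Nat.choose_le_choose (k + i) (by omega : k + l ≤ k + l + i)
  have hT1 : a ^ (-(i : ℤ)) * C1 * C2 * (if i + K ≤ l then (1 : ℝ) else 0)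
      ≤ Q ^ E * C1 * C3 := by
    have hind : (if i + K ≤ l then (1 : ℝ) else 0) ≤ 1 := by split <;> norm_num
    have hind0 : (0:ℝ) ≤ (if i + K ≤ l then (1 : ℝ) else 0) := by split <;> norm_num
    have h1 : a ^ (-(i : ℤ)) * C1 * C2 * (if i + K ≤ l then (1 : ℝ) else 0)
        ≤ a ^ (-(i : ℤ)) * C1 * C2 * 1 := by
      apply mul_le_mul_of_nonneg_left hind
      positivity
    rw [mul_one] at h1
    refine h1.trans ?_
    have := haiz.trans hE4
    gcongr
  -- term 2 bound
  have hQE2 : (Q ^ E) ^ 2 = Q ^ (2*k + i : ℕ) := by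
    rw [← Real.rpow_natCast (Q ^ E) 2, ← Real.rpow_mul hQ0.le, ← Real.rpow_natCast Q (2*k+i)]
    congr 1
    rw [hEdef]
    push_cast
    ring
  have hchoose : ((k + l + i).choose k : ℝ) ≤ (Q ^ E) ^ 2 * ((k + l).choose k) := by
    have h1 := choose_iter K N k l hK (by omega) hl i
    have h2 : Q ^ i ≤ Q ^ (2*k + i : ℕ) := pow_le_pow_right₀ hQ1 (by omega)
    rw [hQE2]
    calc ((k + l + i).choose k : ℝ) ≤ Q ^ i * ((k + l).choose k) := h1
      _ ≤ Q ^ (2*k + i : ℕ) * ((k + l).choose k) := by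
          apply mul_le_mul_of_nonneg_right h2 (by positivity)
  have hC4 : C4 ≤ Q ^ E * C1 := by
    have hQE0 : 0 ≤ Q ^ E := Real.rpow_nonneg hQ0.le _
    calc C4 ≤ Real.sqrt ((Q ^ E) ^ 2 * ((k + l).choose k)) := Real.sqrt_le_sqrt hchoose
      _ = Q ^ E * C1 := by
          rw [Real.sqrt_mul (by positivity), Real.sqrt_sq hQE0]
  have hT2 : a ^ i * C4 * C3 ≤ Q ^ E * C1 * C3 := by
    have hai : a ^ i ≤ 1 := pow_le_one₀ ha0.le ha₂.le
    calc a ^ i * C4 * C3 ≤ 1 * (Q ^ E * C1) * C3 := by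
          apply mul_le_mul_of_nonneg_right _ hC3
          exact mul_le_mul hai hC4 (Real.sqrt_nonneg _) (by norm_num)
      _ = Q ^ E * C1 * C3 := by ring
  calc a ^ (-(i : ℤ)) * C1 * C2 * (if i + K ≤ l then (1 : ℝ) else 0)
        + a ^ i * C4 * C3 ≤ Q ^ E * C1 * C3 + Q ^ E * C1 * C3 := add_le_add hT1 hT2
    _ = 2 * Q ^ ((k:ℝ)/2) * Q ^ (((k:ℝ)+i)/2) * C1 * C3 := by rw [← hQE]; ring
end

section
/- Second technical lemma: for positive integers m > q and reals α, β > 0, the polynomial P(x) = -α x^m + β x^q - 1 is nonpositive on [0,∞) if and only if (β/m)^m (q/α)^q ≤ (m-q)^{-(m-q)}. -/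
/-- Second technical lemma: for integers `m > q ≥ 1` and reals `α, β > 0`, the polynomial
`P(x) = -α x^m + β x^q - 1` is nonpositive on `[0,∞)` if and only if
`(β/m)^m (q/α)^q ≤ (m-q)^{-(m-q)}`. -/
theorem second_technical_lemma (m q : ℕ) (hq : 1 ≤ q) (hqm : q < m)
    (α β : ℝ) (hα : 0 < α) (hβ : 0 < β) :
    (∀ x : ℝ, 0 ≤ x → -α * x ^ m + β * x ^ q - 1 ≤ 0)
      ↔ (β / m) ^ m * (q / α) ^ q ≤ 1 / ((m - q : ℕ) : ℝ) ^ (m - q) := by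
  set c := m - q with hcdef
  have hc : 0 < c := Nat.sub_pos_of_lt hqm
  have hm : m = q + c := by omega
  have hm0 : (0:ℝ) < m := Nat.cast_pos.mpr (by omega)
  have hq0 : (0:ℝ) < q := Nat.cast_pos.mpr hq
  have hc0 : (0:ℝ) < c := Nat.cast_pos.mpr hc
  have hmr : (m:ℝ) = (q:ℝ) + (c:ℝ) := by rw [hm]; push_cast; ring
  have key : (β / m) ^ m * ((q:ℝ) / α) ^ q * (c:ℝ) ^ c
      = ((q:ℝ) * β / (m * α)) ^ q * (β * c / m) ^ c := by
    rw [show (β / (m:ℝ)) ^ m = (β / m) ^ q * (β / m) ^ c by rw [hm, pow_add]]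
    field_simp
    ring
  rw [le_div_iff₀ (by positivity), key]
  constructor
  · intro h
    set t : ℝ := ((q:ℝ) * β / (m * α)) ^ ((c:ℝ)⁻¹) with htdef
    have ht0 : 0 ≤ t := Real.rpow_nonneg (by positivity) _
    have htc : t ^ c = (q:ℝ) * β / (m * α) := by
      rw [← Real.rpow_natCast t c, htdef, ← Real.rpow_mul (by positivity),
        inv_mul_cancel₀ (by positivity : (c:ℝ) ≠ 0), Real.rpow_one]
    have h1 : t ^ q * (β * c / m) ≤ 1 := by
      have h0 := h t ht0
      rw [hm, pow_add, htc] at h0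
      have hid : t ^ q * (β * c / m) = -α * (t ^ q * ((q:ℝ) * β / (m * α))) + β * t ^ q := by
        rw [hmr]; field_simp; ring
      linarith [hid]
    have h2 : (t ^ q * (β * c / m)) ^ c ≤ 1 := by
      calc (t ^ q * (β * c / m)) ^ c ≤ 1 ^ c :=
            pow_le_pow_left₀ (by positivity) h1 c
        _ = 1 := one_pow c
    rw [mul_pow, ← pow_mul, mul_comm q c, pow_mul, htc] at h2
    exact h2
  · intro hcond x hx
    rcases eq_or_lt_of_le hx with rfl | hx
    · simp only [zero_pow (by omega : q ≠ 0), zero_pow (by omega : m ≠ 0)]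
      norm_num
    set A : ℝ := (m:ℝ) * α / q with hA
    set B : ℝ := (m:ℝ) / c with hB
    have hA0 : 0 < A := by positivity
    have hB0 : 0 < B := by positivity
    have hGA : ((q:ℝ) * β / (m * α)) ^ q * (β * c / m) ^ c = β ^ m / (A ^ q * B ^ c) := by
      rw [show β ^ m = β ^ q * β ^ c by rw [hm, pow_add], hA, hB]
      rw [div_pow, div_pow, div_pow, div_pow, mul_pow, mul_pow, mul_pow]; field_simp
    have hβm : β ^ m ≤ A ^ q * B ^ c := by
      rw [hGA, div_le_one (by positivity)] at hcond
      exact hcond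
    set K : ℝ := A ^ ((q:ℝ) / m) * B ^ ((c:ℝ) / m) with hK
    have hK0 : 0 < K := by
      apply mul_pos <;> exact Real.rpow_pos_of_pos (by positivity) _
    have hKm : K ^ m = A ^ q * B ^ c := by
      rw [← Real.rpow_natCast K m, hK, Real.mul_rpow (by positivity) (by positivity),
        ← Real.rpow_mul hA0.le, ← Real.rpow_mul hB0.le,
        div_mul_cancel₀ _ (ne_of_gt hm0), div_mul_cancel₀ _ (ne_of_gt hm0),
        Real.rpow_natCast, Real.rpow_natCast]
    have hβK : β ≤ K := by
      rw [← pow_le_pow_iff_left₀ hβ.le hK0.le (by omega : m ≠ 0), hKm]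
      exact hβm
    have hw : (q:ℝ)/m + (c:ℝ)/m = 1 := by
      rw [← add_div, ← hmr, div_self (ne_of_gt hm0)]
    have amgm := Real.geom_mean_le_arith_mean2_weighted
      (by positivity : (0:ℝ) ≤ (q:ℝ)/m) (by positivity : (0:ℝ) ≤ (c:ℝ)/m)
      (by positivity : (0:ℝ) ≤ A * x ^ m) hB0.le hw
    have hxm : ((x ^ m : ℝ)) ^ ((q:ℝ)/m) = x ^ q := by
      rw [← Real.rpow_natCast x m, ← Real.rpow_mul hx.le,
        mul_div_cancel₀ _ (ne_of_gt hm0)]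
      exact Real.rpow_natCast x q
    have hp1 : (A * x ^ m) ^ ((q:ℝ)/m) = A ^ ((q:ℝ)/m) * x ^ q := by
      rw [Real.mul_rpow hA0.le (by positivity), hxm]
    have hw1 : (q:ℝ)/m * (A * x ^ m) = α * x ^ m := by
      rw [hA]; field_simp
    have hw2 : (c:ℝ)/m * B = 1 := by
      rw [hB]; field_simp
    rw [hp1, hw1, hw2] at amgm
    have hfin : β * x ^ q ≤ α * x ^ m + 1 := by
      calc β * x ^ q ≤ K * x ^ q := by
            apply mul_le_mul_of_nonneg_right hβK (by positivity)
        _ = A ^ ((q:ℝ)/m) * x ^ q * B ^ ((c:ℝ)/m) := by rw [hK]; ring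
        _ ≤ α * x ^ m + 1 := amgm
    linarith
end

section
/- Auxiliary binomial-ratio bound: for natural numbers i, k, l with l ≥ i, C(k+l, k+i) / C(k+i+l, k+i) ≤ (l/(l+1))^i. -/
/-- Auxiliary binomial-ratio bound: for natural numbers `i, k, l` with `l ≥ i`,
`C(k+l, k+i) / C(k+i+l, k+i) ≤ (l/(l+1))^i`. -/
theorem binomial_ratio_bound_two (i k l : ℕ) (hil : i ≤ l) :
    (((k + l).choose (k + i) : ℝ)) / ((k + i + l).choose (k + i))
      ≤ ((l : ℝ) / ((l : ℝ) + 1)) ^ i := by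
  revert hil
  induction i with
  | zero =>
    intro _
    have h : (0:ℝ) < ((k + 0 + l).choose k : ℝ) := by
      exact_mod_cast Nat.choose_pos (by omega)
    rw [pow_zero, show k + 0 = k by ring, show k + l = k + 0 + l by ring,
      div_self h.ne']
  | succ n ih =>
    intro hil
    have hn : n ≤ l := Nat.le_of_succ_le hil
    have ih' := ih hn
    set r : ℝ := (l : ℝ) / ((l : ℝ) + 1) with hr
    have hB : (0:ℝ) < ((k + n + l).choose (k + n) : ℝ) := by
      exact_mod_cast Nat.choose_pos (by omega)
    have hB' : (0:ℝ) < ((k + n + l + 1).choose (k + n + 1) : ℝ) := by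
      exact_mod_cast Nat.choose_pos (by omega)
    have hK : (0:ℝ) < ((k : ℝ) + n + 1) := by positivity
    -- numerator recurrence
    have h1n : (k + l).choose (k + n + 1) * (k + n + 1)
        = (k + l).choose (k + n) * (l - n) := by
      have := Nat.choose_succ_right_eq (k + l) (k + n)
      rwa [show k + l - (k + n) = l - n by omega] at this
    have h1 : ((k + l).choose (k + n + 1) : ℝ) * ((k:ℝ) + n + 1)
        = ((k + l).choose (k + n) : ℝ) * ((l:ℝ) - n) := by
      have := congrArg (Nat.cast : ℕ → ℝ) h1n
      push_cast [Nat.cast_sub hn] at this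
      linarith [this]
    -- denominator recurrence
    have h2n : (k + n + l + 1) * (k + n + l).choose (k + n)
        = (k + n + l + 1).choose (k + n + 1) * (k + n + 1) :=
      Nat.add_one_mul_choose_eq (k + n + l) (k + n)
    have h2 : ((k + n + l).choose (k + n) : ℝ) * ((k:ℝ) + n + l + 1)
        = ((k + n + l + 1).choose (k + n + 1) : ℝ) * ((k:ℝ) + n + 1) := by
      have := congrArg (Nat.cast : ℕ → ℝ) h2n
      push_cast at this
      linarith [this]
    have hA : ((k + l).choose (k + n) : ℝ) ≤ r ^ n * ((k + n + l).choose (k + n) : ℝ) :=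
      (div_le_iff₀ hB).mp ih'
    have hln : (0:ℝ) ≤ (l:ℝ) - n := by
      have : (n:ℝ) ≤ l := by exact_mod_cast hn
      linarith
    have step : ((l:ℝ) - n) ≤ r * ((k:ℝ) + n + l + 1) := by
      rw [hr, div_mul_eq_mul_div, le_div_iff₀ (by positivity)]
      have hk0 : (0:ℝ) ≤ (k:ℝ) := Nat.cast_nonneg k
      have hn0 : (0:ℝ) ≤ (n:ℝ) := Nat.cast_nonneg n
      have hl0 : (0:ℝ) ≤ (l:ℝ) := Nat.cast_nonneg l
      nlinarith
    have key : ((k + l).choose (k + n + 1) : ℝ) * ((k:ℝ) + n + 1)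
        ≤ (r ^ n * r * ((k + n + l + 1).choose (k + n + 1) : ℝ)) * ((k:ℝ) + n + 1) := by
      calc ((k + l).choose (k + n + 1) : ℝ) * ((k:ℝ) + n + 1)
          = ((k + l).choose (k + n) : ℝ) * ((l:ℝ) - n) := h1
        _ ≤ (r ^ n * ((k + n + l).choose (k + n) : ℝ)) * (r * ((k:ℝ) + n + l + 1)) := by
            apply mul_le_mul hA step hln
            positivity
        _ = (r ^ n * r) * (((k + n + l).choose (k + n) : ℝ) * ((k:ℝ) + n + l + 1)) := by
            ring
        _ = (r ^ n * r) * (((k + n + l + 1).choose (k + n + 1) : ℝ) * ((k:ℝ) + n + 1)) := by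
            rw [h2]
        _ = (r ^ n * r * ((k + n + l + 1).choose (k + n + 1) : ℝ)) * ((k:ℝ) + n + 1) := by
            ring
    have key2 : ((k + l).choose (k + n + 1) : ℝ)
        ≤ r ^ n * r * ((k + n + l + 1).choose (k + n + 1) : ℝ) :=
      le_of_mul_le_mul_right key hK
    have e1 : k + (n + 1) + l = k + n + l + 1 := by omega
    have e2 : k + (n + 1) = k + n + 1 := by omega
    rw [e1, e2, pow_succ, div_le_iff₀ hB']
    exact key2
end

section
/- Discrete Gronwall-type rate: let r ≥ 2 and (u_n)_{n ≥ n₀} be a nonnegative sequence satisfying u_n ≤ c_n u_{n-1} + d_n where c_n = 1 - (r+1)/(2n) + O(n^{-3/2}) and d_n = C n^{-(r+1)/2} for some constant C > 0. Then limsup_{n→∞} n^{(r-1)/2} u_n < ∞. -/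
open Filter Topology

/-- Discrete Gronwall-type rate: let `r ≥ 2` and `(u_n)` be a nonnegative sequence with
`u_n ≤ c_n u_{n-1} + d_n` for `n ≥ n₀`, where `c_n ∈ (0,1]`,
`c_n = 1 - (r+1)/(2n) + O(n^{-3/2})` and `d_n = C n^{-(r+1)/2}`. Then
`limsup n^{(r-1)/2} u_n < ∞`, i.e. `n^{(r-1)/2} u_n` is eventually bounded. -/
theorem discrete_gronwall_rate (r : ℕ) (hr : 2 ≤ r) (n₀ : ℕ) (hn₀ : 2 ≤ n₀)
    (u c d : ℕ → ℝ)
    (hu_nonneg : ∀ n, 0 ≤ u n)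
    (hrec : ∀ n, n₀ ≤ n → u n ≤ c n * u (n - 1) + d n)
    (hc : ∀ n, n₀ ≤ n → 0 < c n ∧ c n ≤ 1)
    (C' : ℝ) (hc_asymp : ∀ n, n₀ ≤ n →
      |c n - (1 - ((r : ℝ) + 1) / (2 * n))| ≤ C' * (n : ℝ) ^ (-(3 : ℝ) / 2))
    (C : ℝ) (hC : 0 < C)
    (hd : ∀ n, n₀ ≤ n → d n = C * (n : ℝ) ^ (-(((r : ℝ) + 1) / 2))) :
    ∃ M : ℝ, ∀ᶠ n : ℕ in atTop, (n : ℝ) ^ (((r : ℝ) - 1) / 2) * u n ≤ M := by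
  set α : ℝ := ((r : ℝ) - 1) / 2 with hαdef
  have hr2 : (2 : ℝ) ≤ (r : ℝ) := by exact_mod_cast hr
  have hαpos : 0 < α := by rw [hαdef]; linarith
  set q : ℕ → ℝ := fun n => (1 - 1 / (n : ℝ)) ^ (-α) with hqdef
  set ρ : ℕ → ℝ := fun n => c n * q n with hρdef
  -- q n → 1
  have hbase : Tendsto (fun n : ℕ => 1 - 1 / (n : ℝ)) atTop (𝓝 1) := by
    have h := tendsto_one_div_atTop_nhds_zero_nat (𝕜 := ℝ)
    simpa using tendsto_const_nhds.sub h
  have hq0 : Tendsto q atTop (𝓝 1) := by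
    have hct : ContinuousAt (fun x : ℝ => x ^ (-α)) 1 :=
      Real.continuousAt_rpow_const 1 (-α) (Or.inl one_ne_zero)
    have := hct.tendsto.comp hbase
    simpa [hqdef, Real.one_rpow, Function.comp_def] using this
  -- n (q n - 1) → α
  have hg : HasDerivAt (fun x : ℝ => (1 - x) ^ (-α)) α 0 := by
    have h1 : HasDerivAt (fun x : ℝ => 1 - x) (-1) 0 := by
      simpa using (hasDerivAt_id (0:ℝ)).const_sub 1
    have h2 := h1.rpow_const (p := -α) (Or.inl (by norm_num))
    convert h2 using 1
    simp [Real.one_rpow]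
  have hinv : Tendsto (fun n : ℕ => ((n : ℝ))⁻¹) atTop (𝓝[≠] (0 : ℝ)) := by
    rw [tendsto_nhdsWithin_iff]
    refine ⟨by simpa [one_div] using tendsto_one_div_atTop_nhds_zero_nat (𝕜 := ℝ), ?_⟩
    filter_upwards [eventually_gt_atTop 0] with n hn
    have hnpos : (0:ℝ) < (n:ℝ) := by exact_mod_cast hn
    have : ((n:ℝ))⁻¹ ≠ 0 := by positivity
    simpa using this
  have hq1 : Tendsto (fun n : ℕ => (n : ℝ) * (q n - 1)) atTop (𝓝 α) := by
    have hs : Tendsto (fun n : ℕ => slope (fun x : ℝ => (1 - x) ^ (-α)) 0 ((n : ℝ))⁻¹)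
        atTop (𝓝 α) := (hasDerivAt_iff_tendsto_slope.mp hg).comp hinv
    refine hs.congr' ?_
    filter_upwards [eventually_gt_atTop 0] with n hn
    rw [slope_def_field]; simp only [sub_zero]; rw [Real.one_rpow, div_eq_mul_inv, inv_inv]
    simp only [hqdef, one_div]
    ring
  -- error term → 0
  have herr : Tendsto (fun n : ℕ => (n : ℝ) * (c n - (1 - ((r : ℝ) + 1) / (2 * n))))
      atTop (𝓝 0) := by
    have hC'0 : 0 ≤ C' := by
      have h := hc_asymp n₀ le_rfl
      have hn₀pos : (0:ℝ) < (n₀:ℝ) := by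
        have : 0 < n₀ := by omega
        exact_mod_cast this
      have hpos : (0:ℝ) < (n₀ : ℝ) ^ (-(3:ℝ)/2) := Real.rpow_pos_of_pos hn₀pos _
      nlinarith [abs_nonneg (c n₀ - (1 - ((r : ℝ) + 1) / (2 * n₀)))]
    have hlim : Tendsto (fun n : ℕ => C' * (n : ℝ) ^ (-(1:ℝ)/2)) atTop (𝓝 0) := by
      have h := (tendsto_rpow_neg_atTop (by norm_num : (0:ℝ) < 1/2)).comp
        (tendsto_natCast_atTop_atTop (R := ℝ))
      have h2 := h.const_mul C'
      simpa [Function.comp, neg_div, mul_zero] using h2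
    apply squeeze_zero_norm' _ hlim
    filter_upwards [eventually_ge_atTop (max n₀ 1)] with n hn
    have hn₀' : n₀ ≤ n := le_trans (le_max_left _ _) hn
    have hn1 : 1 ≤ n := le_trans (le_max_right _ _) hn
    have hnpos : (0:ℝ) < (n:ℝ) := by exact_mod_cast hn1
    have h := hc_asymp n hn₀'
    have key : (n:ℝ) * ((n:ℝ) ^ (-(3:ℝ)/2)) = (n:ℝ) ^ (-(1:ℝ)/2) := by
      have h3 := Real.rpow_add hnpos 1 (-(3:ℝ)/2)
      rw [Real.rpow_one] at h3
      rw [← h3]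
      norm_num
    rw [Real.norm_eq_abs, abs_mul, abs_of_pos hnpos]
    calc (n:ℝ) * |c n - (1 - ((r : ℝ) + 1) / (2 * n))|
        ≤ (n:ℝ) * (C' * (n : ℝ) ^ (-(3 : ℝ) / 2)) :=
          mul_le_mul_of_nonneg_left h hnpos.le
      _ = C' * (n:ℝ) ^ (-(1:ℝ)/2) := by rw [← key]; ring
  -- n (ρ n - 1) → -1
  have hρlim : Tendsto (fun n : ℕ => (n : ℝ) * (ρ n - 1)) atTop (𝓝 (-1)) := by
    have hcomb := ((herr.mul hq0).add (hq1.sub (hq0.const_mul (((r:ℝ)+1)/2))))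
    have hval : (0 : ℝ) * 1 + (α - ((r:ℝ)+1)/2 * 1) = -1 := by
      rw [hαdef]; ring
    rw [hval] at hcomb
    refine hcomb.congr' ?_
    filter_upwards [eventually_gt_atTop 0] with n hn
    have hn0 : ((n : ℝ)) ≠ 0 := by
      have hnpos : (0:ℝ) < (n:ℝ) := by exact_mod_cast hn
      positivity
    show ((n:ℝ) * (c n - (1 - ((r:ℝ)+1)/(2*(n:ℝ))))) * q n
        + ((n:ℝ) * (q n - 1) - ((r:ℝ)+1)/2 * q n) = (n:ℝ) * (ρ n - 1)
    have hrho : ρ n = c n * q n := rfl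
    rw [hrho]
    generalize q n = Q
    field_simp
    ring
  -- eventually ρ n ≤ 1 - 1/(2n)
  have hev : ∀ᶠ n : ℕ in atTop, ρ n ≤ 1 - 1 / (2 * (n:ℝ)) := by
    have h1 : ∀ᶠ n : ℕ in atTop, (n : ℝ) * (ρ n - 1) ≤ -(1/2) := by
      have h2 : ∀ᶠ x in 𝓝 (-1 : ℝ), x ≤ -(1/2) := by
        apply eventually_le_nhds; norm_num
      exact hρlim.eventually h2
    filter_upwards [h1, eventually_gt_atTop 0] with n hn hn0
    have hnpos : (0:ℝ) < (n:ℝ) := by exact_mod_cast hn0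
    have h4 : ρ n - 1 ≤ -(1/2) / (n:ℝ) := by
      rw [le_div_iff₀ hnpos, mul_comm]
      exact hn
    have h5 : -(1/2)/(n:ℝ) = -(1/(2*(n:ℝ))) := by ring
    linarith
  obtain ⟨N₁, hN₁⟩ := eventually_atTop.mp hev
  set N : ℕ := max N₁ (max n₀ 2) with hNdef
  have hNn₀ : n₀ ≤ N := le_trans (le_max_left _ _) (le_max_right _ _)
  have hN2 : 2 ≤ N := le_trans (le_max_right _ _) (le_max_right _ _)
  set M : ℝ := max ((N:ℝ) ^ α * u N) (2 * C) with hMdef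
  have hM2C : 2 * C ≤ M := le_max_right _ _
  have key : ∀ n, N ≤ n → (n:ℝ) ^ α * u n ≤ M := by
    intro n hn
    induction n, hn using Nat.le_induction with
    | base => exact le_max_left _ _
    | succ n hn ih =>
      have hn2 : 2 ≤ n := le_trans hN2 hn
      have hm₀ : n₀ ≤ n + 1 := le_trans hNn₀ (le_trans hn (Nat.le_succ n))
      have hnpos : (0:ℝ) < (n:ℝ) := by
        have : 0 < n := by omega
        exact_mod_cast this
      have hmpos : (0:ℝ) < ((n+1:ℕ):ℝ) := by push_cast; linarith
      have hrec' := hrec (n+1) hm₀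
      rw [Nat.add_sub_cancel] at hrec'
      have hd' := hd (n+1) hm₀
      have hρ' : ρ (n+1) ≤ 1 - 1/(2*((n+1:ℕ):ℝ)) :=
        hN₁ (n+1) (le_trans (le_max_left _ _) (le_trans hn (Nat.le_succ n)))
      have hA : ((n+1:ℕ):ℝ) ^ α = q (n+1) * (n:ℝ) ^ α := by
        simp only [hqdef]
        have h1 : 1 - 1 / ((n+1:ℕ):ℝ) = (n:ℝ) / ((n+1:ℕ):ℝ) := by
          push_cast
          field_simp
          ring
        rw [h1, Real.rpow_neg (by positivity), Real.div_rpow hnpos.le hmpos.le, inv_div,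
          div_mul_cancel₀ _ (Real.rpow_pos_of_pos hnpos α).ne']
      have hB : ((n+1:ℕ):ℝ) ^ α * d (n+1) = C / ((n+1:ℕ):ℝ) := by
        rw [hd']
        rw [show ((n+1:ℕ):ℝ) ^ α * (C * ((n+1:ℕ):ℝ) ^ (-(((r:ℝ)+1)/2)))
            = C * (((n+1:ℕ):ℝ) ^ α * ((n+1:ℕ):ℝ) ^ (-(((r:ℝ)+1)/2))) from by ring]
        rw [← Real.rpow_add hmpos]
        rw [show α + -(((r:ℝ)+1)/2) = -1 from by rw [hαdef]; ring]
        rw [Real.rpow_neg_one, div_eq_mul_inv]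
      have hv : ((n+1:ℕ):ℝ)^α * u (n+1) ≤ ρ (n+1) * ((n:ℝ)^α * u n) + C/((n+1:ℕ):ℝ) := by
        calc ((n+1:ℕ):ℝ)^α * u (n+1)
            ≤ ((n+1:ℕ):ℝ)^α * (c (n+1) * u n + d (n+1)) :=
              mul_le_mul_of_nonneg_left hrec' (Real.rpow_nonneg hmpos.le α)
          _ = c (n+1) * (((n+1:ℕ):ℝ)^α * u n) + ((n+1:ℕ):ℝ)^α * d (n+1) := by ring
          _ = c (n+1) * (((n+1:ℕ):ℝ)^α * u n) + C/((n+1:ℕ):ℝ) := by rw [hB]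
          _ = ρ (n+1) * ((n:ℝ)^α * u n) + C/((n+1:ℕ):ℝ) := by
              rw [hA]; simp only [hρdef]; ring
      have hvn0 : 0 ≤ (n:ℝ)^α * u n :=
        mul_nonneg (Real.rpow_nonneg hnpos.le α) (hu_nonneg n)
      have hfac0 : 0 ≤ 1 - 1/(2*((n+1:ℕ):ℝ)) := by
        have h5 : 1/(2*((n+1:ℕ):ℝ)) ≤ 1 := by
          rw [div_le_one (by positivity)]
          push_cast
          linarith
        linarith
      have hstep : ((n+1:ℕ):ℝ)^α * u (n+1) ≤ (1 - 1/(2*((n+1:ℕ):ℝ))) * M + C/((n+1:ℕ):ℝ) :=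
        calc ((n+1:ℕ):ℝ)^α * u (n+1)
            ≤ ρ (n+1) * ((n:ℝ)^α * u n) + C/((n+1:ℕ):ℝ) := hv
          _ ≤ (1 - 1/(2*((n+1:ℕ):ℝ))) * ((n:ℝ)^α * u n) + C/((n+1:ℕ):ℝ) :=
              add_le_add_left (mul_le_mul_of_nonneg_right hρ' hvn0) _
          _ ≤ (1 - 1/(2*((n+1:ℕ):ℝ))) * M + C/((n+1:ℕ):ℝ) :=
              add_le_add_left (mul_le_mul_of_nonneg_left ih hfac0) _
      have hfin : (1 - 1/(2*((n+1:ℕ):ℝ))) * M + C/((n+1:ℕ):ℝ) ≤ M := by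
        have heq : (1 - 1/(2*((n+1:ℕ):ℝ))) * M + C/((n+1:ℕ):ℝ)
            = M - (M - 2*C)/(2*((n+1:ℕ):ℝ)) := by
          field_simp
          ring
        rw [heq]
        have h6 : 0 ≤ (M - 2*C)/(2*((n+1:ℕ):ℝ)) :=
          div_nonneg (by linarith) (by positivity)
        linarith
      exact le_trans hstep hfin
  refine ⟨M, ?_⟩
  filter_upwards [eventually_ge_atTop N] with n hn
  exact key n hn
end
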